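/- Let F be a finite set, φ : F^ℕ → ℝ continuous, and let M denote the set of shift-invariant Borel probability measures ν maximizing ∫φ dν. Let (β_i) be positive reals with β_i → +∞, let μ_i be an equilibrium state for β_iφ for each i, and suppose μ_i → μ in the weak-* topology. Then μ ∈ M and h(μ) = sup{h(ν) : ν ∈ M}; that is, weak-* accumulation points of equilibrium states at zero temperature maximize entropy among the φ-maximizing measures. -/

import Mathlib

open MeasureTheory Filter Topology
open scoped ENNReal Classical

noncomputable section

/-- The shift map `(Tx)(n) = x(n+1)` on `F^ℕ`. -/
def shiftF {F : Type} (x : ℕ → F) : ℕ → F := fun n => x (n + 1)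

/-- The metric `d(x,y) = 2^{-min{n : x n ≠ y n}}` for `x ≠ y`, and `d(x,x) = 0`. -/
def distF {F : Type} (x y : ℕ → F) : ℝ :=
  if x = y then 0 else ((2 : ℝ) ^ sInf {n : ℕ | x n ≠ y n})⁻¹

/-- A subshift: a nonempty, closed, shift-invariant subset of `F^ℕ`. -/
def IsSubshiftF {F : Type} [TopologicalSpace F] (X : Set (ℕ → F)) : Prop :=
  X.Nonempty ∧ IsClosed X ∧ ∀ x ∈ X, shiftF x ∈ X

/-- The potential `φ_X(y) = -d(y, X) = -inf {d(y,x) : x ∈ X}`. -/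
def phiF {F : Type} (X : Set (ℕ → F)) (y : ℕ → F) : ℝ := -sInf (distF y '' X)

/-- The cylinder set of points whose first `n` symbols form the word `w`. -/
def cylinderF {F : Type} {n : ℕ} (w : Fin n → F) : Set (ℕ → F) :=
  {x | ∀ i : Fin n, x i = w i}

/-- The entropy `H_n(μ)` of the `n`-block marginal of `μ` (base-2 logarithm). -/
def HblockF {F : Type} [Fintype F] [MeasurableSpace F] (μ : Measure (ℕ → F)) (n : ℕ) : ℝ :=
  -∑ w : Fin n → F, (μ (cylinderF w)).toReal * Real.logb 2 (μ (cylinderF w)).toReal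

/-- The Kolmogorov–Sinai entropy `h(μ) = lim_n H_n(μ)/n`; since the limit exists for
shift-invariant measures, we may define it as a `limsup`. -/
def entropyF {F : Type} [Fintype F] [MeasurableSpace F] (μ : Measure (ℕ → F)) : ℝ :=
  limsup (fun n : ℕ => HblockF μ n / n) atTop

/-- A shift-invariant Borel probability measure on `F^ℕ`. -/
def IsInvProbF {F : Type} [MeasurableSpace F] (μ : Measure (ℕ → F)) : Prop :=
  IsProbabilityMeasure μ ∧ μ.map shiftF = μ

/-- An equilibrium state for `βφ`: a shift-invariant Borel probability measure maximizing
`ν ↦ β∫φ dν + h(ν)` over all shift-invariant Borel probability measures. -/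
def IsEquilibriumF {F : Type} [Fintype F] [MeasurableSpace F]
    (φ : (ℕ → F) → ℝ) (β : ℝ) (μ : Measure (ℕ → F)) : Prop :=
  IsInvProbF μ ∧ ∀ ν : Measure (ℕ → F), IsInvProbF ν →
    β * ∫ x, φ x ∂ν + entropyF ν ≤ β * ∫ x, φ x ∂μ + entropyF μ

/-- `ν` is a `φ`-maximizing measure: a shift-invariant Borel probability measure
maximizing `ν ↦ ∫φ dν` (i.e. a member of `M`). -/
def IsMaximizingF {F : Type} [MeasurableSpace F] (φ : (ℕ → F) → ℝ)
    (ν : Measure (ℕ → F)) : Prop :=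
  IsInvProbF ν ∧ ∀ ν' : Measure (ℕ → F), IsInvProbF ν' → ∫ x, φ x ∂ν' ≤ ∫ x, φ x ∂ν

/-!
The entropy of an invariant measure lies in `[0, C]` with `C` depending only on `|F|`, so the
equilibrium inequality for `μᵢ` gives `∫φ dν ≤ ∫φ dμᵢ + C / βᵢ` for every invariant `ν`; letting
`i → ∞` shows that `μ` is `φ`-maximizing. If `ν` is `φ`-maximizing, the same inequality gives
`h(ν) ≤ h(μᵢ)` for all `i`. Finally, entropy is upper semicontinuous for the weak-* topology:
cylinders are clopen, so each block entropy `H_n` is weak-* continuous, and `h = inf_n H_n / n`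
because `n ↦ H_n` is subadditive (Fekete). Hence `h(ν) ≤ h(μ)`.
-/

namespace Real

lemma negMulLog_add_mul_log_le {p a b : ℝ} (hp : 0 ≤ p) (ha : p ≤ a) (hb : p ≤ b) :
    negMulLog p + p * log a + p * log b ≤ a * b - p := by
  rcases hp.eq_or_lt with rfl | hp
  · simpa using mul_nonneg ha hb
  have ha₀ := hp.trans_le ha
  have hb₀ := hp.trans_le hb
  have key : log (a * b / p) ≤ a * b / p - 1 := log_le_sub_one_of_pos (by positivity)
  rw [log_div (by positivity) hp.ne', log_mul ha₀.ne' hb₀.ne'] at key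
  have hcancel : p * (a * b / p - 1) = a * b - p := by field_simp
  have := mul_le_mul_of_nonneg_left key hp.le
  rw [negMulLog]
  linarith

/-- Subadditivity of Shannon entropy: `H(X, Y) ≤ H(X) + H(Y)`. -/
lemma sum_negMulLog_le_add_marginals {α β : Type*} [Fintype α] [Fintype β] (p : α → β → ℝ)
    (hp : ∀ a b, 0 ≤ p a b) (hsum : ∑ a, ∑ b, p a b = 1) :
    ∑ a, ∑ b, negMulLog (p a b) ≤
      ∑ a, negMulLog (∑ b, p a b) + ∑ b, negMulLog (∑ a, p a b) := by
  have key : ∀ a b, negMulLog (p a b) + p a b * log (∑ b', p a b') +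
      p a b * log (∑ a', p a' b) ≤ (∑ b', p a b') * (∑ a', p a' b) - p a b := fun a b =>
    negMulLog_add_mul_log_le (hp a b)
      (Finset.single_le_sum (fun b _ => hp a b) (Finset.mem_univ b))
      (Finset.single_le_sum (fun a _ => hp a b) (Finset.mem_univ a))
  have hsum_key := Finset.sum_le_sum fun a (_ : a ∈ Finset.univ) =>
    Finset.sum_le_sum fun b (_ : b ∈ Finset.univ) => key a b
  simp only [Finset.sum_add_distrib, Finset.sum_sub_distrib] at hsum_key
  rw [Finset.sum_comm (f := fun a b => p a b * log (∑ a', p a' b))] at hsum_key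
  simp only [← Finset.sum_mul, ← Finset.mul_sum, hsum] at hsum_key
  rw [Finset.sum_comm] at hsum
  simp only [negMulLog, neg_mul, Finset.sum_neg_distrib, hsum] at hsum_key ⊢
  linarith

end Real

section Cylinders

open Function

variable {F : Type}

lemma shiftF_iterate_apply (k : ℕ) (x : ℕ → F) (j : ℕ) : shiftF^[k] x j = x (j + k) := by
  induction k generalizing x with
  | zero => rfl
  | succ k ih => rw [Function.iterate_succ_apply, ih]; rfl

lemma cylinderF_eq_iInter {n : ℕ} (w : Fin n → F) :
    cylinderF w = ⋂ i : Fin n, (fun x : ℕ → F => x i) ⁻¹' {w i} := by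
  ext x; simp [cylinderF]

lemma cylinderF_append {n m : ℕ} (u : Fin n → F) (v : Fin m → F) :
    cylinderF (Fin.append u v) = cylinderF u ∩ shiftF^[n] ⁻¹' cylinderF v := by
  ext x
  simp only [cylinderF, Set.mem_ofPred_eq, Set.mem_inter_iff, Set.mem_preimage,
    shiftF_iterate_apply, Fin.forall_fin_add, Fin.append_left, Fin.append_right,
    Fin.val_castAdd, Fin.val_natAdd, add_comm]

lemma pairwise_disjoint_cylinderF (n : ℕ) :
    Pairwise (Disjoint on (cylinderF : (Fin n → F) → Set (ℕ → F))) :=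
  fun _ _ hne => Set.disjoint_left.2 fun _ hx hx' =>
    hne (funext fun i => (hx i).symm.trans (hx' i))

lemma iUnion_cylinderF (n : ℕ) : ⋃ w : Fin n → F, cylinderF w = Set.univ :=
  Set.eq_univ_of_forall fun x => Set.mem_iUnion.2 ⟨fun i => x i, fun _ => rfl⟩

variable [MeasurableSpace F]

lemma measurable_shiftF : Measurable (shiftF : (ℕ → F) → ℕ → F) :=
  measurable_pi_lambda _ fun n => measurable_pi_apply (n + 1)

lemma IsInvProbF.measurePreserving {μ : Measure (ℕ → F)} (hμ : IsInvProbF μ) :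
    MeasurePreserving shiftF μ μ :=
  ⟨measurable_shiftF, hμ.2⟩

variable [DiscreteMeasurableSpace F]

lemma measurableSet_cylinderF {n : ℕ} (w : Fin n → F) : MeasurableSet (cylinderF w) := by
  rw [cylinderF_eq_iInter]
  exact .iInter fun i => measurable_pi_apply _ (.singleton _)

lemma sum_measureReal_preimage_cylinderF_inter [Fintype F] {X : Type*} [MeasurableSpace X]
    (μ : Measure X) [IsFiniteMeasure μ] {g : X → ℕ → F} (hg : Measurable g) (n : ℕ) {s : Set X}
    (hs : MeasurableSet s) :
    ∑ w : Fin n → F, μ.real (g ⁻¹' cylinderF w ∩ s) = μ.real s := by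
  rw [← measureReal_iUnion_fintype
    (fun _ _ hne => ((pairwise_disjoint_cylinderF n hne).preimage g).mono
      Set.inter_subset_left Set.inter_subset_left)
    (fun w => (hg (measurableSet_cylinderF w)).inter hs),
    ← Set.iUnion_inter, ← Set.preimage_iUnion, iUnion_cylinderF, Set.preimage_univ,
    Set.univ_inter]

end Cylinders

section BlockEntropy

variable {F : Type} [Fintype F] [MeasurableSpace F]

lemma HblockF_eq_sum_negMulLog (μ : Measure (ℕ → F)) (n : ℕ) :
    HblockF μ n = (∑ w : Fin n → F, Real.negMulLog (μ.real (cylinderF w))) / Real.log 2 := by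
  rw [HblockF, Finset.sum_div, ← Finset.sum_neg_distrib]
  refine Finset.sum_congr rfl fun w _ => ?_
  rw [Real.negMulLog, Real.logb, measureReal_def]
  ring

lemma HblockF_le_card (μ : Measure (ℕ → F)) (n : ℕ) :
    HblockF μ n ≤ Fintype.card (Fin n → F) / Real.log 2 := by
  rw [HblockF_eq_sum_negMulLog]
  gcongr
  calc ∑ w : Fin n → F, Real.negMulLog (μ.real (cylinderF w))
      ≤ ∑ _w : Fin n → F, (1 : ℝ) := Finset.sum_le_sum fun _ _ =>
        (Real.negMulLog_le_one_sub_self measureReal_nonneg).trans (by simp)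
    _ = Fintype.card (Fin n → F) := by simp

lemma HblockF_nonneg (μ : Measure (ℕ → F)) [IsProbabilityMeasure μ] (n : ℕ) :
    0 ≤ HblockF μ n := by
  rw [HblockF_eq_sum_negMulLog]
  exact div_nonneg (Finset.sum_nonneg fun _ _ =>
    Real.negMulLog_nonneg measureReal_nonneg measureReal_le_one) (Real.log_nonneg one_le_two)

lemma bddBelow_HblockF_div (μ : Measure (ℕ → F)) [IsProbabilityMeasure μ] :
    BddBelow (Set.range fun n : ℕ => HblockF μ n / n) :=
  ⟨0, Set.forall_mem_range.2 fun n => div_nonneg (HblockF_nonneg μ n) n.cast_nonneg⟩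

variable [DiscreteMeasurableSpace F]

lemma sum_measureReal_cylinderF (μ : Measure (ℕ → F)) [IsProbabilityMeasure μ] (n : ℕ) :
    ∑ w : Fin n → F, μ.real (cylinderF w) = 1 := by
  simpa using sum_measureReal_preimage_cylinderF_inter μ measurable_id n MeasurableSet.univ

lemma HblockF_subadditive {μ : Measure (ℕ → F)} (hμ : IsInvProbF μ) :
    Subadditive (HblockF μ) := by
  have := hμ.1
  intro n m
  simp only [HblockF_eq_sum_negMulLog, ← add_div]
  gcongr
  have hT : Measurable (shiftF^[n] : (ℕ → F) → ℕ → F) := measurable_shiftF.iterate n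
  have hleft (u : Fin n → F) : ∑ v : Fin m → F,
      μ.real (cylinderF u ∩ shiftF^[n] ⁻¹' cylinderF v) = μ.real (cylinderF u) := by
    simp only [Set.inter_comm (cylinderF u)]
    exact sum_measureReal_preimage_cylinderF_inter μ hT m (measurableSet_cylinderF u)
  have hright (v : Fin m → F) : ∑ u : Fin n → F,
      μ.real (cylinderF u ∩ shiftF^[n] ⁻¹' cylinderF v) = μ.real (cylinderF v) := by
    rw [← (hμ.measurePreserving.iterate n).measureReal_preimage
      (measurableSet_cylinderF v).nullMeasurableSet]
    exact sum_measureReal_preimage_cylinderF_inter μ measurable_id n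
      (hT (measurableSet_cylinderF v))
  calc ∑ w : Fin (n + m) → F, Real.negMulLog (μ.real (cylinderF w))
      = ∑ u : Fin n → F, ∑ v : Fin m → F,
          Real.negMulLog (μ.real (cylinderF u ∩ shiftF^[n] ⁻¹' cylinderF v)) := by
        rw [← (Fin.appendEquiv n m).sum_comp, Fintype.sum_prod_type]
        simp_rw [← cylinderF_append]
        rfl
    _ ≤ _ := Real.sum_negMulLog_le_add_marginals _ (fun _ _ => measureReal_nonneg)
        (by simp only [hleft, sum_measureReal_cylinderF])
    _ = _ := by simp only [hleft, hright]

end BlockEntropy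

section Entropy

variable {F : Type} [Fintype F] [MeasurableSpace F] [DiscreteMeasurableSpace F]
  {μ : Measure (ℕ → F)}

lemma IsInvProbF.entropyF_eq_lim (hμ : IsInvProbF μ) :
    entropyF μ = (HblockF_subadditive hμ).lim :=
  have := hμ.1
  ((HblockF_subadditive hμ).tendsto_lim (bddBelow_HblockF_div μ)).limsup_eq

lemma IsInvProbF.tendsto_HblockF_div (hμ : IsInvProbF μ) :
    Tendsto (fun n : ℕ => HblockF μ n / n) atTop (𝓝 (entropyF μ)) :=
  have := hμ.1
  hμ.entropyF_eq_lim ▸ (HblockF_subadditive hμ).tendsto_lim (bddBelow_HblockF_div μ)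

lemma IsInvProbF.entropyF_le_HblockF_div (hμ : IsInvProbF μ) {n : ℕ} (hn : n ≠ 0) :
    entropyF μ ≤ HblockF μ n / n :=
  have := hμ.1
  hμ.entropyF_eq_lim ▸ (HblockF_subadditive hμ).lim_le_div (bddBelow_HblockF_div μ) hn

lemma IsInvProbF.entropyF_nonneg (hμ : IsInvProbF μ) : 0 ≤ entropyF μ :=
  have := hμ.1
  ge_of_tendsto' hμ.tendsto_HblockF_div fun n => div_nonneg (HblockF_nonneg μ n) n.cast_nonneg

lemma IsInvProbF.entropyF_le_card (hμ : IsInvProbF μ) :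
    entropyF μ ≤ Fintype.card F / Real.log 2 := by
  calc entropyF μ ≤ HblockF μ 1 / (1 : ℕ) := hμ.entropyF_le_HblockF_div one_ne_zero
    _ ≤ Fintype.card (Fin 1 → F) / Real.log 2 := by simpa using HblockF_le_card μ 1
    _ = Fintype.card F / Real.log 2 := by simp

end Entropy

section WeakConvergence

variable {ι Ω : Type*} [TopologicalSpace Ω] [MeasurableSpace Ω] {l : Filter ι}
  {μs : ι → Measure Ω} {μ : Measure Ω}

lemma isProbabilityMeasure_of_tendsto_integral [l.NeBot]
    (hμs : ∀ i, IsProbabilityMeasure (μs i))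
    (hconv : ∀ f : C(Ω, ℝ), Tendsto (fun i => ∫ x, f x ∂μs i) l (𝓝 (∫ x, f x ∂μ))) :
    IsProbabilityMeasure μ := by
  have h := hconv (ContinuousMap.const Ω 1)
  simp only [ContinuousMap.const_apply, integral_const, smul_eq_mul, mul_one, probReal_univ] at h
  exact ⟨(ENNReal.toReal_eq_one_iff _).mp (tendsto_nhds_unique h tendsto_const_nhds)⟩

lemma map_eq_of_tendsto_integral [l.NeBot] [HasOuterApproxClosed Ω] [BorelSpace Ω]
    [IsFiniteMeasure μ] {T : Ω → Ω} (hT : Continuous T) (hμs : ∀ i, (μs i).map T = μs i)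
    (hconv : ∀ f : C(Ω, ℝ), Tendsto (fun i => ∫ x, f x ∂μs i) l (𝓝 (∫ x, f x ∂μ))) :
    μ.map T = μ := by
  refine ext_of_forall_integral_eq_of_IsFiniteMeasure fun f => ?_
  rw [integral_map hT.aemeasurable f.continuous.aestronglyMeasurable]
  refine tendsto_nhds_unique ((hconv (f.toContinuousMap.comp ⟨T, hT⟩)).congr fun i => ?_)
    (hconv f.toContinuousMap)
  show ∫ x, f (T x) ∂μs i = ∫ x, f x ∂μs i
  conv_rhs => rw [← hμs i]
  exact (integral_map hT.aemeasurable f.continuous.aestronglyMeasurable).symm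

lemma tendsto_measureReal_of_isClopen [OpensMeasurableSpace Ω] {s : Set Ω} (hs : IsClopen s)
    (hconv : ∀ f : C(Ω, ℝ), Tendsto (fun i => ∫ x, f x ∂μs i) l (𝓝 (∫ x, f x ∂μ))) :
    Tendsto (fun i => (μs i).real s) l (𝓝 (μ.real s)) := by
  simpa [integral_indicator_one hs.isOpen.measurableSet] using
    hconv (BoundedContinuousFunction.indicator s hs).toContinuousMap

end WeakConvergence

section ShiftSpace

variable {F : Type} [TopologicalSpace F]

lemma continuous_shiftF : Continuous (shiftF : (ℕ → F) → ℕ → F) :=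
  continuous_pi fun n => continuous_apply (n + 1)

variable [DiscreteTopology F]

lemma isClopen_cylinderF {n : ℕ} (w : Fin n → F) : IsClopen (cylinderF w) := by
  rw [cylinderF_eq_iInter]
  exact isClopen_iInter_of_finite fun i => (isClopen_discrete _).preimage (continuous_apply _)

variable [Fintype F] [MeasurableSpace F] [DiscreteMeasurableSpace F]
  {ι : Type*} {l : Filter ι} {μs : ι → Measure (ℕ → F)} {μ : Measure (ℕ → F)}

lemma isInvProbF_of_tendsto_integral [l.NeBot] (hμs : ∀ i, IsInvProbF (μs i))
    (hconv : ∀ f : C(ℕ → F, ℝ), Tendsto (fun i => ∫ x, f x ∂μs i) l (𝓝 (∫ x, f x ∂μ))) :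
    IsInvProbF μ :=
  have := isProbabilityMeasure_of_tendsto_integral (fun i => (hμs i).1) hconv
  ⟨this, map_eq_of_tendsto_integral continuous_shiftF (fun i => (hμs i).2) hconv⟩

lemma tendsto_HblockF_of_tendsto_integral
    (hconv : ∀ f : C(ℕ → F, ℝ), Tendsto (fun i => ∫ x, f x ∂μs i) l (𝓝 (∫ x, f x ∂μ)))
    (n : ℕ) : Tendsto (fun i => HblockF (μs i) n) l (𝓝 (HblockF μ n)) := by
  simp only [HblockF_eq_sum_negMulLog]
  exact (tendsto_finsetSum _ fun w _ => (Real.continuous_negMulLog.tendsto _).comp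
    (tendsto_measureReal_of_isClopen (isClopen_cylinderF w) hconv)).div_const _

lemma le_entropyF_of_tendsto_integral [l.NeBot] (hμs : ∀ i, IsInvProbF (μs i))
    (hconv : ∀ f : C(ℕ → F, ℝ), Tendsto (fun i => ∫ x, f x ∂μs i) l (𝓝 (∫ x, f x ∂μ)))
    {c : ℝ} (hc : ∀ i, c ≤ entropyF (μs i)) : c ≤ entropyF μ :=
  ge_of_tendsto (isInvProbF_of_tendsto_integral hμs hconv).tendsto_HblockF_div <|
    (eventually_ne_atTop 0).mono fun n hn =>
      ge_of_tendsto' ((tendsto_HblockF_of_tendsto_integral hconv n).div_const _) fun i =>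
        (hc i).trans ((hμs i).entropyF_le_HblockF_div hn)

end ShiftSpace

section Equilibrium

variable {F : Type} [Fintype F] [MeasurableSpace F]
  {φ : (ℕ → F) → ℝ} {β : ℝ} {μ ν : Measure (ℕ → F)}

lemma IsEquilibriumF.entropyF_le (hμ : IsEquilibriumF φ β μ) (hβ : 0 ≤ β)
    (hν : IsMaximizingF φ ν) : entropyF ν ≤ entropyF μ := by
  have := hμ.2 ν hν.1
  have := mul_le_mul_of_nonneg_left (hν.2 μ hμ.1) hβ
  linarith

variable [DiscreteMeasurableSpace F]

lemma IsEquilibriumF.integral_le_add_div (hμ : IsEquilibriumF φ β μ) (hβ : 0 < β)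
    (hν : IsInvProbF ν) :
    ∫ x, φ x ∂ν ≤ ∫ x, φ x ∂μ + Fintype.card F / Real.log 2 / β := by
  have hgap := hμ.2 ν hν
  have := hν.entropyF_nonneg
  have := hμ.1.entropyF_le_card
  rw [← sub_le_iff_le_add', le_div_iff₀ hβ]
  linarith

end Equilibrium

/-- Let `φ : F^ℕ → ℝ` be continuous, `β_i → +∞` positive reals, `μ_i`
an equilibrium state for `β_i φ`, and suppose `μ_i → μ` weak-*.  Then `μ ∈ M` (the set of
`φ`-maximizing measures) and `h(μ) = sup {h(ν) : ν ∈ M}`: zero-temperature accumulation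
points of equilibrium states maximize entropy among the `φ`-maximizing measures. -/
theorem stmt13 (F : Type) [Fintype F] [TopologicalSpace F] [DiscreteTopology F]
    [MeasurableSpace F] [DiscreteMeasurableSpace F]
    (φ : (ℕ → F) → ℝ) (hφ : Continuous φ)
    (β : ℕ → ℝ) (hβpos : ∀ i, 0 < β i) (hβ : Tendsto β atTop atTop)
    (μs : ℕ → Measure (ℕ → F)) (hμs : ∀ i, IsEquilibriumF φ (β i) (μs i))
    (μ : Measure (ℕ → F))
    (hconv : ∀ f : C(ℕ → F, ℝ),
      Tendsto (fun i => ∫ x, f x ∂(μs i)) atTop (𝓝 (∫ x, f x ∂μ))) :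
    IsMaximizingF φ μ ∧
      entropyF μ = sSup {r | ∃ ν : Measure (ℕ → F), IsMaximizingF φ ν ∧ r = entropyF ν} := by
  have hinv : ∀ i, IsInvProbF (μs i) := fun i => (hμs i).1
  have hmax : IsMaximizingF φ μ := by
    refine ⟨isInvProbF_of_tendsto_integral hinv hconv, fun ν hν => ?_⟩
    have hlim : Tendsto (fun i => ∫ x, φ x ∂μs i + Fintype.card F / Real.log 2 / β i) atTop
        (𝓝 (∫ x, φ x ∂μ)) := by
      simpa using (hconv (ContinuousMap.mk φ hφ)).add (tendsto_const_nhds.div_atTop hβ)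
    exact ge_of_tendsto' hlim fun i => (hμs i).integral_le_add_div (hβpos i) hν
  refine ⟨hmax, Eq.symm <| IsGreatest.csSup_eq ⟨⟨μ, hmax, rfl⟩, ?_⟩⟩
  rintro _ ⟨ν, hν, rfl⟩
  exact le_entropyF_of_tendsto_integral hinv hconv fun i => (hμs i).entropyF_le (hβpos i).le hν
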